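/- Let k be a commutative ring, L a Lie algebra over k, and f ∈ L an element such that ad(f) : L → L, x ↦ [f, x], is locally nilpotent. Then the inner derivation of the universal enveloping algebra U(L) given by u ↦ ι(f)·u − u·ι(f) is locally nilpotent on U(L), where ι : L → U(L) is the canonical map. -/

import Mathlib

/-!
`ad(ι f)` is a derivation of `U(L)`, and by the Leibniz rule
`D^[n] (x * y) = ∑ i + j = n, (n choose i) • D^[i] x * D^[j] y`
the elements on which a derivation is locally nilpotent form a subalgebra. Since
`ad(ι f) ∘ ι = ι ∘ ad f`, this subalgebra contains `ι(L)`, which generates `U(L)`.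
-/

open Finset

namespace LinearMap

variable {R A : Type*} [CommSemiring R] [Ring A] [Algebra R A]

theorem iterate_map_mul_of_leibniz (D : A →ₗ[R] A) (hD : ∀ x y, D (x * y) = D x * y + x * D y)
    (n : ℕ) (x y : A) :
    D^[n] (x * y) = ∑ ij ∈ antidiagonal n, n.choose ij.1 • (D^[ij.1] x * D^[ij.2] y) := by
  induction n with
  | zero => simp
  | succ n ih =>
    rw [sum_antidiagonal_choose_succ_nsmul (fun i j => D^[i] x * D^[j] y) n]
    simp only [Function.iterate_succ_apply', ih, map_sum, map_nsmul, hD, smul_add,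
      sum_add_distrib]
    rw [add_comm]
    congr 1
    refine sum_congr rfl ?_
    rintro ⟨i, j⟩ hij
    rw [Nat.choose_symm_of_eq_add (mem_antidiagonal.1 hij).symm]

theorem iterate_eq_zero_of_le {D : A →ₗ[R] A} {x : A} {m n : ℕ} (hx : D^[m] x = 0)
    (hmn : m ≤ n) : D^[n] x = 0 := by
  rw [← Nat.sub_add_cancel hmn, Function.iterate_add_apply, hx, iterate_map_zero]

def locallyNilpotentSubalgebra (D : A →ₗ[R] A) (hD : ∀ x y, D (x * y) = D x * y + x * D y) :
    Subalgebra R A where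
  carrier := {x | ∃ n, D^[n] x = 0}
  add_mem' := by
    rintro x y ⟨m, hm⟩ ⟨n, hn⟩
    refine ⟨m + n, ?_⟩
    rw [iterate_map_add, iterate_eq_zero_of_le hm (m.le_add_right n),
      iterate_eq_zero_of_le hn (n.le_add_left m), add_zero]
  mul_mem' := by
    rintro x y ⟨m, hm⟩ ⟨n, hn⟩
    refine ⟨m + n, ?_⟩
    rw [iterate_map_mul_of_leibniz D hD]
    refine sum_eq_zero fun ⟨i, j⟩ hij ↦ ?_
    have hij : i + j = m + n := mem_antidiagonal.1 hij
    rcases le_or_gt m i with hi | hi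
    · rw [iterate_eq_zero_of_le hm hi, zero_mul, smul_zero]
    · rw [iterate_eq_zero_of_le hn (by omega : n ≤ j), mul_zero, smul_zero]
  algebraMap_mem' r := by
    have hD1 : D 1 = 0 := by simpa using hD 1 1
    exact ⟨1, by rw [Function.iterate_one, Algebra.algebraMap_eq_smul_one, map_smul, hD1,
      smul_zero]⟩

end LinearMap

section OfAssociative

attribute [local instance] LieRing.ofAssociativeRing

theorem LieAlgebra.ad_mul {R A : Type*} [CommRing R] [Ring A] [Algebra R A] (a x y : A) :
    ad R A a (x * y) = ad R A a x * y + x * ad R A a y := by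
  simp only [ad_apply, Ring.lie_def]
  noncomm_ring

namespace UniversalEnvelopingAlgebra

variable (R : Type*) {L : Type*} [CommRing R] [LieRing L] [LieAlgebra R L]

theorem adjoin_range_ι : Algebra.adjoin R (Set.range (ι R (L := L))) = ⊤ := by
  have hι : ⇑(ι R (L := L)) = mkAlgHom R L ∘ TensorAlgebra.ι R := rfl
  rw [hι, Set.range_comp, Algebra.adjoin_image, TensorAlgebra.adjoin_range_ι, Algebra.map_top,
    AlgHom.range_eq_top]
  exact RingCon.mkₐ_surjective (α := R) (ringCon R L)

theorem exists_iterate_ad_ι_eq_zero {f : L} (hf : ∀ x, ∃ N, (LieAlgebra.ad R L f)^[N] x = 0)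
    (u : UniversalEnvelopingAlgebra R L) : ∃ N, (LieAlgebra.ad R _ (ι R f))^[N] u = 0 := by
  let S := LinearMap.locallyNilpotentSubalgebra _ (LieAlgebra.ad_mul (R := R) (ι R f))
  have hsemiconj : Function.Semiconj (ι R) (LieAlgebra.ad R L f) (LieAlgebra.ad R _ (ι R f)) :=
    fun x ↦ (ι R).map_lie f x
  have hrange : Set.range (ι R) ⊆ (S : Set (UniversalEnvelopingAlgebra R L)) := by
    rintro _ ⟨x, rfl⟩
    obtain ⟨N, hN⟩ := hf x
    exact ⟨N, by rw [← hsemiconj.iterate_right N x, hN, map_zero]⟩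
  exact Algebra.adjoin_le hrange ((adjoin_range_ι (L := L) R).symm ▸ Algebra.mem_top)

end UniversalEnvelopingAlgebra

end OfAssociative

theorem stmt_5 (k : Type*) [CommRing k] (L : Type*) [LieRing L] [LieAlgebra k L]
    (f : L) (hnil : ∀ x : L, ∃ N : ℕ, (fun y => ⁅f, y⁆)^[N] x = 0) :
    ∀ u : UniversalEnvelopingAlgebra k L, ∃ N : ℕ,
      (fun v => (UniversalEnvelopingAlgebra.ι k f) * v
        - v * (UniversalEnvelopingAlgebra.ι k f))^[N] u = 0 :=
  UniversalEnvelopingAlgebra.exists_iterate_ad_ι_eq_zero k hnil
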